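/- Let a, b ∈ k⟨X⟩ * k[Y] be commuting homogeneous elements of equal total degree, and suppose v₀ ∈ supp(a) is non-pure. Then supp(a) ∩ [v₀] and supp(b) ∩ [v₀] are nonempty, and the sets of prefixes {p(v) : v ∈ supp(a) ∩ [v₀]} and {p(w) : w ∈ supp(b) ∩ [v₀]} coincide, as do the corresponding sets of suffixes. -/

import Mathlib

/-- Words over `X ⊔ Y`. -/
abbrev FM (X Y : Type) := FreeMonoid (X ⊕ Y)

/-- Swapping two adjacent `Y`-letters. -/
def yRel (X Y : Type) : FM X Y → FM X Y → Prop := fun a b =>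
  ∃ (u v : FM X Y) (y₁ y₂ : Y),
    a = u * FreeMonoid.of (Sum.inr y₁) * FreeMonoid.of (Sum.inr y₂) * v ∧
    b = u * FreeMonoid.of (Sum.inr y₂) * FreeMonoid.of (Sum.inr y₁) * v

/-- The congruence generated by swaps of adjacent `Y`-letters. -/
def coCon (X Y : Type) : Con (FM X Y) := conGen (yRel X Y)

/-- The coproduct monoid `⟨X⟩ * [Y]`. -/
abbrev CoprodM (X Y : Type) := (coCon X Y).Quotient

/-- Length descends to the quotient. -/
def lenHom (X Y : Type) : CoprodM X Y →* Multiplicative ℕ :=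
  Con.lift _ (FreeMonoid.lift fun _ => Multiplicative.ofAdd 1) (by
    refine Con.conGen_le.2 ?_
    rintro a b ⟨u, v, y₁, y₂, rfl, rfl⟩
    simp [Con.ker_rel, map_mul])

/-- Length of an element of the coproduct monoid. -/
def len {X Y : Type} (w : CoprodM X Y) : ℕ := Multiplicative.toAdd (lenHom X Y w)

/-- A monoid recording the commuting prefix and suffix. -/
inductive PS (Y : Type) where
  | pure : Multiset Y → PS Y
  | mixed : Multiset Y → Multiset Y → PS Y

def PS.mul {Y : Type} : PS Y → PS Y → PS Y
  | .pure c, .pure d => .pure (c + d)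
  | .pure c, .mixed p s => .mixed (c + p) s
  | .mixed p s, .pure d => .mixed p (s + d)
  | .mixed p _, .mixed _ s' => .mixed p s'

instance {Y : Type} : Monoid (PS Y) where
  mul := PS.mul
  one := .pure 0
  mul_assoc a b c := by
    rcases a <;> rcases b <;> rcases c <;>
      simp [(· * ·), PS.mul, add_assoc]
  one_mul a := by rcases a <;> simp [(· * ·), PS.mul]
  mul_one a := by rcases a <;> simp [(· * ·), PS.mul]

/-- The prefix/suffix data descends to the quotient. -/
def psHom (X Y : Type) : CoprodM X Y →* PS Y :=
  Con.lift _ (FreeMonoid.lift fun a =>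
      match a with
      | Sum.inl _ => PS.mixed 0 0
      | Sum.inr y => PS.pure {y}) (by
    refine Con.conGen_le.2 ?_
    rintro a b ⟨u, v, y₁, y₂, rfl, rfl⟩
    have key : (PS.pure {y₁} : PS Y) * PS.pure {y₂} = PS.pure {y₂} * PS.pure {y₁} := by
      show PS.mul _ _ = PS.mul _ _
      simp [PS.mul, add_comm]
    simp only [Con.ker_rel, map_mul, FreeMonoid.lift_eval_of]
    rw [mul_assoc _ (PS.pure {y₁}), key, mul_assoc, ← mul_assoc, ← mul_assoc])

/-- The commuting prefix of an element, as a multiset of `Y`-variables. -/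
def pre {X Y : Type} (w : CoprodM X Y) : Multiset Y :=
  match psHom X Y w with
  | .pure c => c
  | .mixed p _ => p

/-- The commuting suffix of an element, as a multiset of `Y`-variables. -/
def suf {X Y : Type} (w : CoprodM X Y) : Multiset Y :=
  match psHom X Y w with
  | .pure c => c
  | .mixed _ s => s

/-- The canonical embedding of the free abelian monoid `[Y]` (words in `Y`). -/
def yEmb (X Y : Type) : FreeMonoid Y →* CoprodM X Y :=
  (Con.mk' (coCon X Y)).comp (FreeMonoid.map Sum.inr)

/-- An element is pure if it involves only `Y`-variables. -/
def IsPure {X Y : Type} (w : CoprodM X Y) : Prop := w ∈ MonoidHom.mrange (yEmb X Y)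

/-- The pure element of the coproduct monoid corresponding to a multiset of
`Y`-variables. -/
noncomputable def pureElt {X Y : Type} (c : Multiset Y) : CoprodM X Y :=
  yEmb X Y (FreeMonoid.ofList c.toList)

/-- The equivalence relation `∼`: equal lengths and either both pure, or equal
prefix lengths, equal middle parts and equal suffix lengths. -/
noncomputable def Sim {X Y : Type} (u v : CoprodM X Y) : Prop :=
  len u = len v ∧
  ((IsPure u ∧ IsPure v) ∨
    (¬ IsPure u ∧ ¬ IsPure v ∧
      Multiset.card (pre u) = Multiset.card (pre v) ∧
      Multiset.card (suf u) = Multiset.card (suf v) ∧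
      ∃ m : CoprodM X Y,
        u = pureElt (pre u) * m * pureElt (suf u) ∧
        v = pureElt (pre v) * m * pureElt (suf v)))

/-!
Every element of `⟨X⟩ * [Y]` has a unique normal form `c x₁ m₁ ⋯ x_r m_r` with `c, mᵢ`
commutative words in `Y`. Write the non-pure `v₀` as `p₀ M₀ x₀ s₀`, where `x₀` is its last
`X`-letter, and attach to `f ∈ R` the polynomials `A_f(c) = ∑_d f(c M₀ x₀ d) d` and
`T_f(L) = ∑_e f(e L) e` in `k[Y]`. If `v w = c M₀ x₀ e L` and `|v| = |v₀|`, the factor `v`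
must end inside the block `x₀ e`, i.e. `v = c M₀ x₀ e₁` and `w = e₂ L` with `e = e₁ + e₂`; so
comparing coefficients in `ab = ba` gives `A_a(c) T_b(L) = A_b(c) T_a(L)`. As `k[Y]` is a domain
and `A_a(p₀)`, `T_a(M₀ x₀ s₀)` and some `T_b(L)` are nonzero, `A_a(c)` and `A_b(c)` vanish
together, as do `T_a(L)` and `T_b(L)`. For `|c| = |p₀|` and `|d| = |s₀|`, the nonvanishing of
`A_f(c)`, resp. `T_f(M₀ x₀ d)`, says exactly that `c` is a prefix, resp. `d` a suffix, of an
element of `supp f ∩ [v₀]`.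
-/

open FreeMonoid

section PureElements

variable {X Y : Type}

def ofX (x : X) : CoprodM X Y := ((of (Sum.inl x) : FM X Y) : CoprodM X Y)

def ofY (y : Y) : CoprodM X Y := ((of (Sum.inr y) : FM X Y) : CoprodM X Y)

theorem yEmb_ofList_of_perm {l l' : List Y} (h : l.Perm l') :
    yEmb X Y (ofList l) = yEmb X Y (ofList l') := by
  induction h with
  | nil => rfl
  | cons a _ ih => rw [ofList_cons, ofList_cons, map_mul, map_mul, ih]
  | swap y₁ y₂ l =>
    refine (Con.eq _).2 <| ConGen.Rel.of _ _
      ⟨1, FreeMonoid.map Sum.inr (ofList l), y₂, y₁, ?_, ?_⟩ <;> simp [ofList_cons, mul_assoc]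
  | trans _ _ ih₁ ih₂ => exact ih₁.trans ih₂

theorem pureElt_coe (l : List Y) : (pureElt (l : Multiset Y) : CoprodM X Y) = yEmb X Y (ofList l) :=
  yEmb_ofList_of_perm (Multiset.coe_eq_coe.1 (Multiset.coe_toList _))

theorem pureElt_zero : (pureElt 0 : CoprodM X Y) = 1 := pureElt_coe []

theorem pureElt_singleton (y : Y) : (pureElt {y} : CoprodM X Y) = ofY y := pureElt_coe [y]

theorem pureElt_add (c d : Multiset Y) :
    (pureElt (c + d) : CoprodM X Y) = pureElt c * pureElt d := by
  obtain ⟨l, rfl⟩ := Quotient.exists_rep c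
  obtain ⟨l', rfl⟩ := Quotient.exists_rep d
  rw [Multiset.quot_mk_to_coe, Multiset.quot_mk_to_coe, Multiset.coe_add, pureElt_coe,
    pureElt_coe, pureElt_coe, ofList_append, map_mul]

theorem isPure_iff {w : CoprodM X Y} : IsPure w ↔ ∃ c, pureElt c = w := by
  constructor
  · rintro ⟨u, rfl⟩
    exact ⟨u.toList, by rw [pureElt_coe, ofList_toList]⟩
  · rintro ⟨c, rfl⟩
    exact ⟨_, rfl⟩

theorem len_ofX (x : X) : len (ofX x : CoprodM X Y) = 1 := rfl

theorem len_ofY (y : Y) : len (ofY y : CoprodM X Y) = 1 := rfl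

theorem len_mul (u v : CoprodM X Y) : len (u * v) = len u + len v := by
  simp only [len, map_mul]; rfl

theorem len_pureElt (c : Multiset Y) : len (pureElt c : CoprodM X Y) = Multiset.card c := by
  induction c using Multiset.induction_on with
  | empty => rw [pureElt_zero]; rfl
  | cons y c ih =>
    rw [← Multiset.singleton_add, pureElt_add, len_mul, ih, pureElt_singleton, len_ofY,
      Multiset.card_add, Multiset.card_singleton, add_comm]

theorem psHom_ofX (x : X) : psHom X Y (ofX x) = .mixed 0 0 := rfl

theorem psHom_ofY (y : Y) : psHom X Y (ofY y) = .pure {y} := rfl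

theorem psHom_pureElt (c : Multiset Y) : psHom X Y (pureElt c) = .pure c := by
  induction c using Multiset.induction_on with
  | empty => rw [pureElt_zero, map_one]; rfl
  | cons y c ih =>
    rw [← Multiset.singleton_add, pureElt_add, map_mul, ih, pureElt_singleton, psHom_ofY]
    rfl

end PureElements

/-- `⟨c, [(x₁, m₁), …, (x_r, m_r)]⟩` stands for the word `c x₁ m₁ ⋯ x_r m_r`. -/
structure NormalForm (X Y : Type) where
  lead : Multiset Y
  blocks : List (X × Multiset Y)

namespace NormalForm

variable {X Y : Type}

instance : Mul (NormalForm X Y) where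
  mul
    | ⟨c₁, []⟩, ⟨c₂, L₂⟩ => ⟨c₁ + c₂, L₂⟩
    | ⟨c₁, L₁@(_ :: _)⟩, ⟨c₂, L₂⟩ => ⟨c₁, L₁.modifyLast (fun b => (b.1, b.2 + c₂)) ++ L₂⟩

theorem nil_mul (c₁ c₂ : Multiset Y) (L₂ : List (X × Multiset Y)) :
    (⟨c₁, []⟩ * ⟨c₂, L₂⟩ : NormalForm X Y) = ⟨c₁ + c₂, L₂⟩ := rfl

theorem concat_mul (c₁ : Multiset Y) (K : List (X × Multiset Y)) (x : X) (m c₂ : Multiset Y)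
    (L₂ : List (X × Multiset Y)) :
    (⟨c₁, K ++ [(x, m)]⟩ * ⟨c₂, L₂⟩ : NormalForm X Y) = ⟨c₁, K ++ (x, m + c₂) :: L₂⟩ := by
  obtain ⟨b, K', hK⟩ := List.exists_cons_of_ne_nil (List.concat_ne_nil (x, m) K)
  rw [hK]
  show (⟨c₁, (b :: K').modifyLast _ ++ L₂⟩ : NormalForm X Y) = _
  rw [← hK, List.modifyLast_concat, List.append_assoc, List.singleton_append]

theorem singleton_mul (c₁ : Multiset Y) (x : X) (m c₂ : Multiset Y) (L₂ : List (X × Multiset Y)) :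
    (⟨c₁, [(x, m)]⟩ * ⟨c₂, L₂⟩ : NormalForm X Y) = ⟨c₁, (x, m + c₂) :: L₂⟩ :=
  concat_mul c₁ [] x m c₂ L₂

instance : Monoid (NormalForm X Y) where
  one := ⟨0, []⟩
  one_mul N := by
    show (⟨0, []⟩ * ⟨N.lead, N.blocks⟩ : NormalForm X Y) = N
    rw [nil_mul, zero_add]
  mul_one N := by
    obtain ⟨c, L⟩ := N
    show (⟨c, L⟩ * ⟨0, []⟩ : NormalForm X Y) = ⟨c, L⟩
    rcases L.eq_nil_or_concat' with rfl | ⟨K, ⟨x, m⟩, rfl⟩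
    · rw [nil_mul, add_zero]
    · rw [concat_mul, add_zero]
  mul_assoc N₁ N₂ N₃ := by
    obtain ⟨c₁, L₁⟩ := N₁
    obtain ⟨c₂, L₂⟩ := N₂
    obtain ⟨c₃, L₃⟩ := N₃
    rcases L₁.eq_nil_or_concat' with rfl | ⟨K₁, ⟨x₁, m₁⟩, rfl⟩ <;>
      rcases L₂.eq_nil_or_concat' with rfl | ⟨K₂, ⟨x₂, m₂⟩, rfl⟩
    · simp only [nil_mul, add_assoc]
    · simp only [nil_mul, concat_mul]
    · simp only [nil_mul, concat_mul, add_assoc]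
    · rw [concat_mul, concat_mul, ← List.cons_append, ← List.append_assoc, concat_mul,
        concat_mul]
      simp

def ofLetter : X ⊕ Y → NormalForm X Y
  | .inl x => ⟨0, [(x, 0)]⟩
  | .inr y => ⟨{y}, []⟩

def normalize : CoprodM X Y →* NormalForm X Y :=
  Con.lift _ (FreeMonoid.lift ofLetter) <| Con.conGen_le.2 <| by
    rintro _ _ ⟨u, v, y₁, y₂, rfl, rfl⟩
    have hcomm : ofLetter (X := X) (.inr y₁) * ofLetter (.inr y₂) =
        ofLetter (.inr y₂) * ofLetter (.inr y₁) := by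
      simp only [ofLetter, nil_mul, add_comm]
    simp only [Con.ker_rel, map_mul, lift_eval_of]
    congr 1
    rw [mul_assoc, hcomm, ← mul_assoc]

noncomputable def eval (N : NormalForm X Y) : CoprodM X Y :=
  pureElt N.lead * (N.blocks.map fun b => ofX b.1 * pureElt b.2).prod

theorem normalize_pureElt (c : Multiset Y) : normalize (pureElt c : CoprodM X Y) = ⟨c, []⟩ := by
  induction c using Multiset.induction_on with
  | empty => rw [pureElt_zero, map_one]; rfl
  | cons y c ih =>
    rw [← Multiset.singleton_add, pureElt_add, map_mul, ih, pureElt_singleton]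
    rfl

theorem normalize_eval (N : NormalForm X Y) : normalize (eval N) = N := by
  obtain ⟨c, L⟩ := N
  have hblocks :
      normalize ((L.map fun b => ofX b.1 * pureElt b.2).prod : CoprodM X Y) = ⟨0, L⟩ := by
    induction L with
    | nil => rfl
    | cons b L ih =>
      rw [List.map_cons, List.prod_cons, map_mul, map_mul, ih, normalize_pureElt]
      show (⟨0, [(b.1, 0)]⟩ * ⟨b.2, []⟩ * ⟨0, L⟩ : NormalForm X Y) = _
      simp only [singleton_mul, zero_add, add_zero]
  rw [eval, map_mul, normalize_pureElt, hblocks, nil_mul, add_zero]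

theorem eval_ofLetter_mul (a : X ⊕ Y) (N : NormalForm X Y) :
    eval (ofLetter a * N) = ((of a : FM X Y) : CoprodM X Y) * eval N := by
  obtain ⟨c, L⟩ := N
  cases a with
  | inl x =>
    show eval (⟨0, [(x, 0)]⟩ * ⟨c, L⟩) = ofX x * _
    rw [singleton_mul, eval, eval, List.map_cons, List.prod_cons, pureElt_zero, one_mul, zero_add,
      mul_assoc]
  | inr y =>
    show eval (⟨{y}, []⟩ * ⟨c, L⟩) = ofY y * _
    rw [nil_mul, eval, eval, pureElt_add, pureElt_singleton, mul_assoc]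

theorem eval_normalize (w : CoprodM X Y) : eval (normalize w) = w := by
  induction w using Con.induction_on with
  | _ g =>
    induction g using FreeMonoid.inductionOn' with
    | one =>
      show pureElt 0 * 1 = 1
      rw [pureElt_zero, one_mul]
    | of_mul a g ih =>
      rw [Con.coe_mul, map_mul]
      conv_rhs => rw [← ih]
      exact eval_ofLetter_mul a _

noncomputable def mulEquiv : CoprodM X Y ≃* NormalForm X Y :=
  { normalize with
    invFun := eval
    left_inv := eval_normalize
    right_inv := normalize_eval }

theorem eval_mul (N₁ N₂ : NormalForm X Y) : eval (N₁ * N₂) = eval N₁ * eval N₂ :=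
  map_mul mulEquiv.symm N₁ N₂

theorem eval_injective : Function.Injective (eval : NormalForm X Y → CoprodM X Y) :=
  mulEquiv.symm.injective

theorem eval_nil (c : Multiset Y) : eval (⟨c, []⟩ : NormalForm X Y) = pureElt c := mul_one _

def blocksLength (L : List (X × Multiset Y)) : ℕ := (L.map fun b => 1 + Multiset.card b.2).sum

def length (N : NormalForm X Y) : ℕ := Multiset.card N.lead + blocksLength N.blocks

theorem length_mk (c : Multiset Y) (L : List (X × Multiset Y)) :
    (⟨c, L⟩ : NormalForm X Y).length = Multiset.card c + blocksLength L := rfl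

@[simp] theorem blocksLength_nil : blocksLength ([] : List (X × Multiset Y)) = 0 := rfl

@[simp] theorem blocksLength_cons (b : X × Multiset Y) (L : List (X × Multiset Y)) :
    blocksLength (b :: L) = 1 + Multiset.card b.2 + blocksLength L := rfl

@[simp] theorem blocksLength_append (K L : List (X × Multiset Y)) :
    blocksLength (K ++ L) = blocksLength K + blocksLength L := by
  simp [blocksLength]

theorem len_eval (N : NormalForm X Y) : len (eval N) = N.length := by
  have hblocks (L : List (X × Multiset Y)) :
      len (L.map fun b => ofX b.1 * pureElt b.2).prod = blocksLength L := by
    induction L with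
    | nil => rfl
    | cons b L ih =>
      rw [List.map_cons, List.prod_cons, len_mul, len_mul, len_ofX, len_pureElt, ih]
      simp [blocksLength]
  rw [eval, len_mul, len_pureElt, hblocks]
  rfl

theorem eval_concat_eq (c : Multiset Y) (K : List (X × Multiset Y)) (x : X) (m : Multiset Y) :
    eval (⟨c, K ++ [(x, m)]⟩ : NormalForm X Y) =
      pureElt c * eval ⟨0, K ++ [(x, 0)]⟩ * pureElt m := by
  rw [← eval_nil, ← eval_nil, ← eval_mul, ← eval_mul, nil_mul, concat_mul, add_zero, zero_add]

theorem psHom_eval_concat_zero (K : List (X × Multiset Y)) (x : X) :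
    psHom X Y (eval ⟨0, K ++ [(x, 0)]⟩) = .mixed 0 0 := by
  induction K with
  | nil => simp [eval, pureElt_zero, psHom_ofX]
  | cons b K ih =>
    rw [eval, pureElt_zero, one_mul] at ih ⊢
    rw [List.cons_append, List.map_cons, List.prod_cons, map_mul, map_mul, ih, psHom_ofX,
      psHom_pureElt]
    rfl

theorem psHom_eval_concat (c : Multiset Y) (K : List (X × Multiset Y)) (x : X) (m : Multiset Y) :
    psHom X Y (eval ⟨c, K ++ [(x, m)]⟩) = .mixed c m := by
  rw [eval_concat_eq, map_mul, map_mul, psHom_pureElt, psHom_pureElt, psHom_eval_concat_zero]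
  show PS.mixed (c + 0) (0 + m) = _
  rw [add_zero, zero_add]

theorem pre_eval_concat (c : Multiset Y) (K : List (X × Multiset Y)) (x : X) (m : Multiset Y) :
    pre (eval (⟨c, K ++ [(x, m)]⟩ : NormalForm X Y)) = c := by
  rw [pre, psHom_eval_concat]

theorem suf_eval_concat (c : Multiset Y) (K : List (X × Multiset Y)) (x : X) (m : Multiset Y) :
    suf (eval (⟨c, K ++ [(x, m)]⟩ : NormalForm X Y)) = m := by
  rw [suf, psHom_eval_concat]

theorem pre_eval (c : Multiset Y) (L : List (X × Multiset Y)) :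
    pre (eval (⟨c, L⟩ : NormalForm X Y)) = c := by
  rcases L.eq_nil_or_concat' with rfl | ⟨K, ⟨x, m⟩, rfl⟩
  · rw [pre, eval_nil, psHom_pureElt]
  · exact pre_eval_concat c K x m

theorem not_isPure_eval_concat (c : Multiset Y) (K : List (X × Multiset Y)) (x : X)
    (m : Multiset Y) :
    ¬ IsPure (eval (⟨c, K ++ [(x, m)]⟩ : NormalForm X Y)) := by
  rw [isPure_iff]
  rintro ⟨c', h⟩
  simpa [normalize_pureElt, normalize_eval] using congrArg (NormalForm.blocks ∘ normalize) h

theorem exists_eq_eval_concat {w : CoprodM X Y} (hw : ¬ IsPure w) :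
    ∃ c K x m, w = eval (⟨c, K ++ [(x, m)]⟩ : NormalForm X Y) := by
  rw [← eval_normalize w] at hw ⊢
  generalize normalize w = N at hw ⊢
  obtain ⟨c, L⟩ := N
  rcases L.eq_nil_or_concat' with rfl | ⟨K, ⟨x, m⟩, rfl⟩
  · exact absurd (isPure_iff.2 ⟨c, (eval_nil c).symm⟩) hw
  · exact ⟨c, K, x, m, rfl⟩

theorem eq_concat_of_mul_eq {N₁ N₂ : NormalForm X Y} {c e : Multiset Y}
    {M L : List (X × Multiset Y)} {x : X} (h : N₁ * N₂ = ⟨c, M ++ (x, e) :: L⟩)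
    (h₁ : Multiset.card c + blocksLength M < N₁.length)
    (h₂ : N₁.length ≤ Multiset.card c + blocksLength M + 1 + Multiset.card e) :
    ∃ e₁ e₂, N₁ = ⟨c, M ++ [(x, e₁)]⟩ ∧ N₂ = ⟨e₂, L⟩ ∧ e₁ + e₂ = e := by
  obtain ⟨c₁, L₁⟩ := N₁
  obtain ⟨c₂, L₂⟩ := N₂
  simp only [length] at h₁ h₂
  rcases L₁.eq_nil_or_concat' with rfl | ⟨K, ⟨x₁, m₁⟩, rfl⟩
  · rw [nil_mul, NormalForm.mk.injEq] at h
    have := congrArg Multiset.card h.1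
    simp only [Multiset.card_add, blocksLength_nil] at this h₁
    omega
  rw [concat_mul, NormalForm.mk.injEq] at h
  obtain ⟨rfl, hL⟩ := h
  simp only [blocksLength_append, blocksLength_cons, blocksLength_nil] at h₁ h₂
  rcases List.append_eq_append_iff.1 hL with ⟨_ | ⟨b, A⟩, rfl, hA⟩ | ⟨_ | ⟨b, A⟩, rfl, hA⟩
  · simp only [List.nil_append, List.cons.injEq, Prod.mk.injEq] at hA
    obtain ⟨⟨rfl, rfl⟩, rfl⟩ := hA
    exact ⟨m₁, c₂, by simp, rfl, rfl⟩
  · simp only [List.cons_append, List.cons.injEq] at hA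
    obtain ⟨rfl, -⟩ := hA
    simp only [blocksLength_append, blocksLength_cons, Multiset.card_add] at h₁
    omega
  · simp only [List.nil_append, List.cons.injEq, Prod.mk.injEq] at hA
    obtain ⟨⟨rfl, rfl⟩, rfl⟩ := hA
    exact ⟨m₁, c₂, by simp, rfl, rfl⟩
  · simp only [List.cons_append, List.cons.injEq] at hA
    obtain ⟨rfl, -⟩ := hA
    simp only [blocksLength_append, blocksLength_cons] at h₂
    omega

theorem mul_eq_eval_iff {v w : CoprodM X Y} {c e : Multiset Y} {M L : List (X × Multiset Y)}
    {x : X} (h₁ : Multiset.card c + blocksLength M < len v)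
    (h₂ : len v ≤ Multiset.card c + blocksLength M + 1 + Multiset.card e) :
    v * w = eval ⟨c, M ++ (x, e) :: L⟩ ↔
      ∃ e₁ e₂, eval ⟨c, M ++ [(x, e₁)]⟩ = v ∧ eval ⟨e₂, L⟩ = w ∧ e₁ + e₂ = e := by
  constructor
  · intro h
    rw [← eval_normalize v, ← eval_normalize w, ← eval_mul] at h
    rw [← eval_normalize v, len_eval] at h₁ h₂
    obtain ⟨e₁, e₂, hv, hw, rfl⟩ := eq_concat_of_mul_eq (eval_injective h) h₁ h₂
    exact ⟨e₁, e₂, by rw [← hv, eval_normalize], by rw [← hw, eval_normalize], rfl⟩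
  · rintro ⟨e₁, e₂, rfl, rfl, rfl⟩
    rw [← eval_mul, concat_mul]

theorem eq_of_pure_mul_mul_pure {N : NormalForm X Y} {p s : Multiset Y}
    {M : List (X × Multiset Y)} {x : X} (h : ⟨p, []⟩ * N * ⟨s, []⟩ = ⟨p, M ++ [(x, s)]⟩) :
    N = ⟨0, M ++ [(x, 0)]⟩ := by
  obtain ⟨c, L⟩ := N
  rcases L.eq_nil_or_concat' with rfl | ⟨K, ⟨x', t⟩, rfl⟩
  · simp [nil_mul] at h
  · simp only [nil_mul, concat_mul, NormalForm.mk.injEq, List.append_singleton_inj,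
      Prod.mk.injEq] at h
    obtain ⟨hc, rfl, rfl, ht⟩ := h
    rw [add_eq_left.1 hc, add_eq_right.1 ht]

end NormalForm

open NormalForm

section Similarity

variable {X Y : Type}

theorem sim_eval_concat_iff {p₀ s₀ : Multiset Y} {M₀ : List (X × Multiset Y)} {x₀ : X}
    (v : CoprodM X Y) :
    Sim v (eval ⟨p₀, M₀ ++ [(x₀, s₀)]⟩) ↔ ∃ c d, Multiset.card c = Multiset.card p₀ ∧
      Multiset.card d = Multiset.card s₀ ∧ v = eval ⟨c, M₀ ++ [(x₀, d)]⟩ := by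
  simp only [Sim, pre_eval_concat, suf_eval_concat]
  constructor
  · rintro ⟨-, ⟨-, hpure⟩ | ⟨-, -, hc, hd, m, hv, hv₀⟩⟩
    · exact absurd hpure (not_isPure_eval_concat _ _ _ _)
    · rw [← eval_nil, ← eval_nil, ← eval_normalize m, ← eval_mul, ← eval_mul] at hv₀
      have hm := eq_of_pure_mul_mul_pure (eval_injective hv₀).symm
      refine ⟨pre v, suf v, hc, hd, hv.trans ?_⟩
      rw [eval_concat_eq, ← hm, eval_normalize]
  · rintro ⟨c, d, hc, hd, rfl⟩
    refine ⟨?_, .inr ⟨not_isPure_eval_concat _ _ _ _, not_isPure_eval_concat _ _ _ _, ?_, ?_,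
      eval ⟨0, M₀ ++ [(x₀, 0)]⟩, ?_, eval_concat_eq _ _ _ _⟩⟩
    · simp [len_eval, length_mk, hc, hd]
    · rw [pre_eval_concat, hc]
    · rw [suf_eval_concat, hd]
    · rw [pre_eval_concat, suf_eval_concat, eval_concat_eq]

end Similarity

section SectionPoly

variable {k M ι : Type*} [Semiring k]

open Classical in
/-- The part of `f` supported on the range of `φ`, reindexed along `σ` (a left inverse of `φ`). -/
noncomputable def sectionPoly (f : MonoidAlgebra k M) (φ : ι → M) (σ : M → ι) :
    AddMonoidAlgebra k ι :=
  f.coeff.sum fun v r => if φ (σ v) = v then AddMonoidAlgebra.single (σ v) r else 0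

theorem coeff_sectionPoly (f : MonoidAlgebra k M) {φ : ι → M} {σ : M → ι}
    (hσ : Function.LeftInverse σ φ) (i : ι) : (sectionPoly f φ σ).coeff i = f.coeff (φ i) := by
  classical
  have hterm (v : M) (r : k) :
      (if φ (σ v) = v then AddMonoidAlgebra.single (σ v) r else 0).coeff i =
        if φ i = v then r else 0 := by
    by_cases hv : φ (σ v) = v
    · rw [if_pos hv, AddMonoidAlgebra.coeff_single, Finsupp.single_apply]
      exact if_congr ⟨fun h : σ v = i => h ▸ hv, fun h : φ i = v => h ▸ hσ i⟩ rfl rfl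
    · rw [if_neg hv, if_neg (fun h : φ i = v => hv (h ▸ congrArg φ (hσ i)))]
      rfl
  rw [sectionPoly, AddMonoidAlgebra.coeff_finsuppSum, Finsupp.sum_apply]
  simp only [hterm, Finsupp.sum_ite_eq, Finsupp.mem_support_iff, ne_eq, ite_not]
  exact ite_eq_right_iff.2 Eq.symm

theorem sectionPoly_ne_zero_iff (f : MonoidAlgebra k M) {φ : ι → M} {σ : M → ι}
    (hσ : Function.LeftInverse σ φ) : sectionPoly f φ σ ≠ 0 ↔ ∃ i, f.coeff (φ i) ≠ 0 := by
  rw [Ne, ← AddMonoidAlgebra.coeff_inj, AddMonoidAlgebra.coeff_zero, Finsupp.ext_iff]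
  simp [coeff_sectionPoly f hσ]

theorem coeff_sectionPoly_mul_sectionPoly [Mul M] [Add ι] (f g : MonoidAlgebra k M)
    {φ ψ : ι → M} {σ τ : M → ι} (hσ : Function.LeftInverse σ φ) (hτ : Function.LeftInverse τ ψ)
    {x : M} {e : ι}
    (hx : ∀ v ∈ f.coeff.support, ∀ w ∈ g.coeff.support,
      v * w = x ↔ ∃ d d', φ d = v ∧ ψ d' = w ∧ d + d' = e) :
    (sectionPoly f φ σ * sectionPoly g ψ τ).coeff e = (f * g).coeff x := by
  classical
  have hterm (v w : M) (r s : k) :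
      ((if φ (σ v) = v then AddMonoidAlgebra.single (σ v) r else 0) *
          (if ψ (τ w) = w then AddMonoidAlgebra.single (τ w) s else 0)).coeff e =
        if ∃ d d', φ d = v ∧ ψ d' = w ∧ d + d' = e then r * s else 0 := by
    have hcond : (∃ d d', φ d = v ∧ ψ d' = w ∧ d + d' = e) ↔
        φ (σ v) = v ∧ ψ (τ w) = w ∧ σ v + τ w = e :=
      ⟨by rintro ⟨d, d', rfl, rfl, rfl⟩; simp [hσ d, hτ d'], fun ⟨h₁, h₂, h₃⟩ => ⟨_, _, h₁, h₂, h₃⟩⟩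
    rw [if_congr hcond rfl rfl]
    split_ifs <;> simp_all [AddMonoidAlgebra.single_mul_single, AddMonoidAlgebra.coeff_single]
  rw [MonoidAlgebra.coeff_mul, sectionPoly, sectionPoly, Finsupp.sum_mul,
    AddMonoidAlgebra.coeff_finsuppSum, Finsupp.sum_apply]
  refine Finsupp.sum_congr fun v hv => ?_
  rw [Finsupp.mul_sum, AddMonoidAlgebra.coeff_finsuppSum, Finsupp.sum_apply]
  refine Finsupp.sum_congr fun w hw => ?_
  rw [hterm, if_congr (hx v hv w hw).symm rfl rfl]

end SectionPoly

/-- Through it, `AddMonoidAlgebra k (Multiset Y)`, the polynomial ring `k[Y]`, is a domain. -/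
instance {Y : Type} : UniqueSums (Multiset Y) := by
  classical
  exact UniqueSums.of_injective_addHom Multiset.toFinsupp.toAddMonoidHom.toAddHom
    Multiset.toFinsupp.injective inferInstance

theorem ne_zero_iff_of_mul_eq_mul {R ι κ : Type*} [MulZeroClass R] [NoZeroDivisors R]
    {A A' : ι → R} {T T' : κ → R} (h : ∀ i j, A i * T' j = A' i * T j) {i₀ : ι} {j₀ j₁ : κ}
    (hA : A i₀ ≠ 0) (hT : T j₀ ≠ 0) (hT' : T' j₁ ≠ 0) :
    (∀ i, A i ≠ 0 ↔ A' i ≠ 0) ∧ ∀ j, T j ≠ 0 ↔ T' j ≠ 0 := by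
  have hAA' (i : ι) : A i ≠ 0 ↔ A' i ≠ 0 :=
    ⟨fun hi => left_ne_zero_of_mul (h i j₁ ▸ mul_ne_zero hi hT'),
      fun hi => left_ne_zero_of_mul ((h i j₀).symm ▸ mul_ne_zero hi hT)⟩
  refine ⟨hAA', fun j => ⟨fun hj => ?_, fun hj => ?_⟩⟩
  · exact right_ne_zero_of_mul ((h i₀ j).symm ▸ mul_ne_zero ((hAA' i₀).1 hA) hj)
  · exact right_ne_zero_of_mul (h i₀ j ▸ mul_ne_zero hA hj)

section ClassPoly

variable {X Y k : Type} [Semiring k]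

/-- `A_f(c)` of the proof sketch, for `M₀ x₀ = M x`. -/
noncomputable def classPoly (f : MonoidAlgebra k (CoprodM X Y)) (M : List (X × Multiset Y)) (x : X)
    (c : Multiset Y) : AddMonoidAlgebra k (Multiset Y) :=
  sectionPoly f (fun d => eval ⟨c, M ++ [(x, d)]⟩) suf

/-- `T_f(L)` of the proof sketch. -/
noncomputable def tailPoly (f : MonoidAlgebra k (CoprodM X Y)) (L : List (X × Multiset Y)) :
    AddMonoidAlgebra k (Multiset Y) :=
  sectionPoly f (fun e => eval ⟨e, L⟩) pre

theorem coeff_classPoly (f : MonoidAlgebra k (CoprodM X Y)) (M : List (X × Multiset Y)) (x : X)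
    (c d : Multiset Y) : (classPoly f M x c).coeff d = f.coeff (eval ⟨c, M ++ [(x, d)]⟩) :=
  coeff_sectionPoly f (suf_eval_concat c M x) d

theorem classPoly_ne_zero_iff (f : MonoidAlgebra k (CoprodM X Y)) (M : List (X × Multiset Y))
    (x : X) (c : Multiset Y) :
    classPoly f M x c ≠ 0 ↔ ∃ d, f.coeff (eval ⟨c, M ++ [(x, d)]⟩) ≠ 0 :=
  sectionPoly_ne_zero_iff f (suf_eval_concat c M x)

theorem tailPoly_ne_zero_iff (f : MonoidAlgebra k (CoprodM X Y)) (L : List (X × Multiset Y)) :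
    tailPoly f L ≠ 0 ↔ ∃ e, f.coeff (eval ⟨e, L⟩) ≠ 0 :=
  sectionPoly_ne_zero_iff f (pre_eval · L)

theorem exists_tailPoly_ne_zero {f : MonoidAlgebra k (CoprodM X Y)} (hf : f ≠ 0) :
    ∃ L, tailPoly f L ≠ 0 := by
  obtain ⟨w, hw⟩ := Finsupp.support_nonempty_iff.2 (mt MonoidAlgebra.coeff_eq_zero.1 hf)
  refine ⟨(normalize w).blocks, (tailPoly_ne_zero_iff f _).2 ⟨(normalize w).lead, ?_⟩⟩
  rwa [eval_normalize, ← Finsupp.mem_support_iff]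

variable {f g : MonoidAlgebra k (CoprodM X Y)} {n : ℕ} {M L : List (X × Multiset Y)} {x : X}
  {c e : Multiset Y}

theorem coeff_classPoly_mul_tailPoly (hf : ∀ v ∈ f.coeff.support, len v = n)
    (h₁ : Multiset.card c + blocksLength M < n)
    (h₂ : n ≤ Multiset.card c + blocksLength M + 1 + Multiset.card e) :
    (classPoly f M x c * tailPoly g L).coeff e = (f * g).coeff (eval ⟨c, M ++ (x, e) :: L⟩) :=
  coeff_sectionPoly_mul_sectionPoly f g (suf_eval_concat c M x) (pre_eval · L)
    fun v hv _ _ => mul_eq_eval_iff (hf v hv ▸ h₁) (hf v hv ▸ h₂)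

theorem coeff_classPoly_mul_eq_zero (hf : ∀ v ∈ f.coeff.support, len v = n)
    (h : ¬ (Multiset.card c + blocksLength M < n ∧
      n ≤ Multiset.card c + blocksLength M + 1 + Multiset.card e))
    (T : AddMonoidAlgebra k (Multiset Y)) : (classPoly f M x c * T).coeff e = 0 := by
  classical
  rw [AddMonoidAlgebra.coeff_mul]
  refine Finset.sum_eq_zero fun d hd => Finset.sum_eq_zero fun e' _ => if_neg fun hde => h ?_
  rw [Finsupp.mem_support_iff, coeff_classPoly] at hd
  have hlen := hf _ (Finsupp.mem_support_iff.2 hd)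
  have hcard := congrArg Multiset.card hde
  simp only [len_eval, length_mk, blocksLength_append, blocksLength_cons, blocksLength_nil,
    Multiset.card_add] at hlen hcard
  omega

theorem classPoly_mul_tailPoly_comm {a b : MonoidAlgebra k (CoprodM X Y)} (hab : a * b = b * a)
    (ha : ∀ v ∈ a.coeff.support, len v = n) (hb : ∀ w ∈ b.coeff.support, len w = n)
    (M : List (X × Multiset Y)) (x : X) (c : Multiset Y) (L : List (X × Multiset Y)) :
    classPoly a M x c * tailPoly b L = classPoly b M x c * tailPoly a L := by
  ext e
  by_cases h : Multiset.card c + blocksLength M < n ∧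
      n ≤ Multiset.card c + blocksLength M + 1 + Multiset.card e
  · rw [coeff_classPoly_mul_tailPoly ha h.1 h.2, coeff_classPoly_mul_tailPoly hb h.1 h.2, hab]
  · rw [coeff_classPoly_mul_eq_zero ha h, coeff_classPoly_mul_eq_zero hb h]

end ClassPoly

section Support

variable {X Y k : Type} [Semiring k] {f : MonoidAlgebra k (CoprodM X Y)} {p₀ s₀ : Multiset Y}
  {M₀ : List (X × Multiset Y)} {x₀ : X}

theorem card_add_card_eq_of_len_eq {c d : Multiset Y}
    (h : len (eval ⟨c, M₀ ++ [(x₀, d)]⟩) = len (eval ⟨p₀, M₀ ++ [(x₀, s₀)]⟩)) :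
    Multiset.card c + Multiset.card d = Multiset.card p₀ + Multiset.card s₀ := by
  simp only [len_eval, length_mk, blocksLength_append, blocksLength_cons, blocksLength_nil] at h
  omega

theorem exists_sim_pre_eq_iff
    (hf : ∀ w ∈ f.coeff.support, len w = len (eval ⟨p₀, M₀ ++ [(x₀, s₀)]⟩)) (c : Multiset Y) :
    (∃ v ∈ f.coeff.support, Sim v (eval ⟨p₀, M₀ ++ [(x₀, s₀)]⟩) ∧ pre v = c) ↔
      Multiset.card c = Multiset.card p₀ ∧ classPoly f M₀ x₀ c ≠ 0 := by
  rw [classPoly_ne_zero_iff]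
  constructor
  · rintro ⟨v, hv, hsim, rfl⟩
    obtain ⟨c, d, hc, -, rfl⟩ := (sim_eval_concat_iff v).1 hsim
    rw [pre_eval_concat]
    exact ⟨hc, d, Finsupp.mem_support_iff.1 hv⟩
  · rintro ⟨hc, d, hd⟩
    have hcard := card_add_card_eq_of_len_eq (hf _ (Finsupp.mem_support_iff.2 hd))
    exact ⟨_, Finsupp.mem_support_iff.2 hd, (sim_eval_concat_iff _).2 ⟨c, d, hc, by omega, rfl⟩,
      pre_eval_concat _ _ _ _⟩

theorem exists_sim_suf_eq_iff
    (hf : ∀ w ∈ f.coeff.support, len w = len (eval ⟨p₀, M₀ ++ [(x₀, s₀)]⟩)) (d : Multiset Y) :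
    (∃ v ∈ f.coeff.support, Sim v (eval ⟨p₀, M₀ ++ [(x₀, s₀)]⟩) ∧ suf v = d) ↔
      Multiset.card d = Multiset.card s₀ ∧ tailPoly f (M₀ ++ [(x₀, d)]) ≠ 0 := by
  rw [tailPoly_ne_zero_iff]
  constructor
  · rintro ⟨v, hv, hsim, rfl⟩
    obtain ⟨c, d, -, hd, rfl⟩ := (sim_eval_concat_iff v).1 hsim
    rw [suf_eval_concat]
    exact ⟨hd, c, Finsupp.mem_support_iff.1 hv⟩
  · rintro ⟨hd, c, hc⟩
    have hcard := card_add_card_eq_of_len_eq (hf _ (Finsupp.mem_support_iff.2 hc))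
    exact ⟨_, Finsupp.mem_support_iff.2 hc, (sim_eval_concat_iff _).2 ⟨c, d, by omega, hd, rfl⟩,
      suf_eval_concat _ _ _ _⟩

end Support

theorem coprod_commuting_homogeneous_prefixes_general {X Y k : Type} [Field k]
    (a b : MonoidAlgebra k (CoprodM X Y)) (n : ℕ)
    (hcomm : a * b = b * a) (hb0 : b ≠ 0)
    (ha : ∀ w ∈ a.coeff.support, len w = n) (hb : ∀ w ∈ b.coeff.support, len w = n)
    (v₀ : CoprodM X Y) (hv₀ : v₀ ∈ a.coeff.support) (hnp : ¬ IsPure v₀) :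
    (∃ v ∈ a.coeff.support, Sim v v₀) ∧ (∃ w ∈ b.coeff.support, Sim w v₀) ∧
      (∀ c : Multiset Y,
        (∃ v ∈ a.coeff.support, Sim v v₀ ∧ pre v = c) ↔
          (∃ w ∈ b.coeff.support, Sim w v₀ ∧ pre w = c)) ∧
      (∀ c : Multiset Y,
        (∃ v ∈ a.coeff.support, Sim v v₀ ∧ suf v = c) ↔
          (∃ w ∈ b.coeff.support, Sim w v₀ ∧ suf w = c)) := by
  obtain ⟨p₀, M₀, x₀, s₀, rfl⟩ := exists_eq_eval_concat hnp
  obtain rfl := ha _ hv₀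
  have hav₀ := Finsupp.mem_support_iff.1 hv₀
  have haA := (classPoly_ne_zero_iff a M₀ x₀ p₀).2 ⟨s₀, hav₀⟩
  have haT := (tailPoly_ne_zero_iff a _).2 ⟨p₀, hav₀⟩
  obtain ⟨L, hbT⟩ := exists_tailPoly_ne_zero hb0
  obtain ⟨hclass, htail⟩ :=
    ne_zero_iff_of_mul_eq_mul (classPoly_mul_tailPoly_comm hcomm ha hb M₀ x₀) haA haT hbT
  refine ⟨⟨_, hv₀, (sim_eval_concat_iff _).2 ⟨p₀, s₀, rfl, rfl, rfl⟩⟩, ?_, fun c => ?_, fun d => ?_⟩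
  · obtain ⟨w, hw, hsim, -⟩ := (exists_sim_pre_eq_iff hb p₀).2 ⟨rfl, (hclass p₀).1 haA⟩
    exact ⟨w, hw, hsim⟩
  · rw [exists_sim_pre_eq_iff ha, exists_sim_pre_eq_iff hb, hclass]
  · rw [exists_sim_suf_eq_iff ha, exists_sim_suf_eq_iff hb, htail]

/-- Lemma 4.1: for commuting homogeneous elements of equal total degree and a
non-pure `v₀ ∈ supp a`, the classes `supp a ∩ [v₀]` and `supp b ∩ [v₀]` are
nonempty and have the same sets of prefixes and of suffixes. -/
theorem coprod_commuting_homogeneous_prefixes {X Y k : Type} [Field k]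
    (a b : MonoidAlgebra k (CoprodM X Y)) (n : ℕ)
    (hcomm : a * b = b * a) (ha0 : a ≠ 0) (hb0 : b ≠ 0)
    (ha : ∀ w ∈ a.coeff.support, len w = n) (hb : ∀ w ∈ b.coeff.support, len w = n)
    (v₀ : CoprodM X Y) (hv₀ : v₀ ∈ a.coeff.support) (hnp : ¬ IsPure v₀) :
    (∃ v ∈ a.coeff.support, Sim v v₀) ∧ (∃ w ∈ b.coeff.support, Sim w v₀) ∧
      (∀ c : Multiset Y,
        (∃ v ∈ a.coeff.support, Sim v v₀ ∧ pre v = c) ↔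
          (∃ w ∈ b.coeff.support, Sim w v₀ ∧ pre w = c)) ∧
      (∀ c : Multiset Y,
        (∃ v ∈ a.coeff.support, Sim v v₀ ∧ suf v = c) ↔
          (∃ w ∈ b.coeff.support, Sim w v₀ ∧ suf w = c)) :=
  coprod_commuting_homogeneous_prefixes_general a b n hcomm hb0 ha hb v₀ hv₀ hnp
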